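/- Fix a positive integer l, generic parameters y, j, and integer i ≥ 1. If s₁(k) is the unique polynomial solution of P_l(2i, i+l−k) = (i+l−k)(−2y−3i−l+2j−k)s₁(k+1) − (i+l+k)(y−j+k)s₁(k), and s₂(k) is the unique polynomial solution of P_l(2i, i+l−k) = (i+l−k)(y−j−k)s₂(k+1) − (i+l+k)(−2y−3i−l+2j+k)s₂(k), then s₁(k) = s₂(1−k) for all k; in particular s₁(1) = s₂(0). -/

import Mathlib

open Finset Polynomial

noncomputable section

/-- rising factorial -/
def rf {R : Type*} [CommRing R] (a : R) (k : ℕ) : R := ∏ i ∈ Finset.range k, (a + i)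

/-- the polynomial `(x²+x+1)^{l-1}(2x+1)(x+2)(x-1)` -/
def APoly (l : ℕ) : Polynomial ℚ :=
  (X ^ 2 + X + 1) ^ (l - 1) * (2 * X + 1) * (X + 2) * (X - 1)

/-- `P_l(e,f) = Σ_r a_r (e)_r (−f)_{2l+1−r}` -/
def PP (l : ℕ) {K : Type*} [Field K] (e f : K) : K :=
  ∑ r ∈ Finset.range (2 * l + 2), ((APoly l).coeff r : K) * rf e r * rf (-f) (2 * l + 1 - r)

/-- the field of rational functions in the two indeterminates `y` and `j` -/
abbrev K : Type := FractionRing (MvPolynomial (Fin 2) ℚ)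

/-- the indeterminate `y` -/
def yv : K := algebraMap (MvPolynomial (Fin 2) ℚ) K (MvPolynomial.X 0)

/-- the indeterminate `j` -/
def jv : K := algebraMap (MvPolynomial (Fin 2) ℚ) K (MvPolynomial.X 1)

/-!
`D := s₁ - s₂ (1 - ·)` satisfies the homogeneous recurrence
`(i+l-k)(-2y-3i-l+2j-k) D(k+1) = (i+l+k)(y-j+k) D(k)`, because `P_l(e, e+2l-f) = -P_l(e, f)`.
The right-hand coefficient vanishes at `k = j - y` while the left-hand one never vanishes at
`j - y + n` (`y`, `j` are independent indeterminates), so `D` has the roots `j - y + n + 1`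
for all `n : ℕ` and is zero.

For the antisymmetry, `P_l(e, f)` is the functional `X ^ m ↦ (e)_m (-f)_(N-m)` (`N = 2l + 1`)
applied to `A = (X²+X+1)^(l-1)(2X+1)(X+2)(X-1)`. Chu–Vandermonde and the reflection
`(-a-k+1)_k = (-1)^k (a)_k` turn `f ↦ e + N - 1 - f` into the substitution
`A ↦ (-1-X)^N A(X/(-1-X))`, and `A` is anti-invariant under it: each factor of `A` is, up to
sign, permuted by `x ↦ x/(-1-x)`.
-/

section RisingFactorial

variable {R : Type*} [CommRing R]

lemma rf_eq_ascPochhammer_eval (a : R) (k : ℕ) : rf a k = (ascPochhammer R k).eval a := by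
  induction k with
  | zero => simp [rf]
  | succ k ih => rw [rf, prod_range_succ, ← rf, ih, ascPochhammer_succ_eval]

lemma rf_add (a : R) (m n : ℕ) : rf a (m + n) = rf a m * rf (a + m) n := by
  simp only [rf, prod_range_add, Nat.cast_add, add_assoc]

lemma rf_neg_sub_add_one (a : R) (k : ℕ) : rf (-a - k + 1) k = (-1) ^ k * rf a k := by
  rw [rf_eq_ascPochhammer_eval, rf_eq_ascPochhammer_eval, show -a - k + 1 = -(a + k - 1) by ring,
    ascPochhammer_eval_neg_eq_descPochhammer, descPochhammer_eval_eq_ascPochhammer]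
  ring_nf

lemma rf_eq_neg_one_pow_mul_descPochhammer_smeval (a : R) (k : ℕ) :
    rf a k = (-1) ^ k * (descPochhammer ℤ k).smeval (-a) := by
  rw [descPochhammer_smeval_eq_ascPochhammer, ascPochhammer_smeval_eq_eval,
    ← descPochhammer_eval_eq_ascPochhammer, ← ascPochhammer_eval_neg_eq_descPochhammer, neg_neg,
    rf_eq_ascPochhammer_eval]

lemma rf_add_eq_sum_choose (a b : R) (n : ℕ) :
    rf (a + b) n = ∑ s ∈ range (n + 1), (n.choose s : R) * rf a s * rf b (n - s) := by
  rw [rf_eq_neg_one_pow_mul_descPochhammer_smeval, neg_add,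
    Ring.descPochhammer_smeval_add _ (Commute.all _ _), mul_sum,
    Nat.sum_antidiagonal_eq_sum_range_succ_mk]
  refine sum_congr rfl fun s hs => ?_
  have hsn : s + (n - s) = n := Nat.add_sub_cancel' (Nat.lt_succ_iff.mp (mem_range.mp hs))
  rw [rf_eq_neg_one_pow_mul_descPochhammer_smeval, rf_eq_neg_one_pow_mul_descPochhammer_smeval,
    ← hsn, pow_add, Nat.add_sub_cancel_left]
  ring

end RisingFactorial

section RisingPairing

variable {F : Type*} [Field F] [CharZero F]

def risingPairing (N : ℕ) (e f : F) : ℚ[X] →ₗ[ℚ] F where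
  toFun p := ∑ m ∈ range (N + 1), (p.coeff m : F) * rf e m * rf (-f) (N - m)
  map_add' p q := by simp only [coeff_add, Rat.cast_add, add_mul, sum_add_distrib]
  map_smul' c p := by simp only [coeff_smul, smul_eq_mul, Rat.cast_mul, mul_sum, Rat.smul_def,
    RingHom.id_apply, mul_assoc]

lemma PP_eq_risingPairing (l : ℕ) (e f : F) :
    PP l e f = risingPairing (2 * l + 1) e f (APoly l) :=
  rfl

lemma risingPairing_X_pow (N : ℕ) (e f : F) {r : ℕ} (hr : r ≤ N) :
    risingPairing N e f (X ^ r) = rf e r * rf (-f) (N - r) := by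
  simp [risingPairing, coeff_X_pow, apply_ite, ite_mul, Nat.lt_succ_iff.mpr hr]

lemma risingPairing_X_pow_mul_one_add_X_pow (r n : ℕ) (e f : F) :
    risingPairing (r + n) e f (X ^ r * (1 + X) ^ n) = rf e r * rf (e + r - f) n := by
  simp only [risingPairing, LinearMap.coe_mk, AddHom.coe_mk]
  rw [add_assoc, sum_range_add, sum_eq_zero fun m hm => ?_, zero_add, sub_eq_add_neg,
    rf_add_eq_sum_choose, mul_sum]
  · refine sum_congr rfl fun s _ => ?_
    rw [coeff_X_pow_mul', if_pos (Nat.le_add_right r s), Nat.add_sub_cancel_left, add_comm 1 X,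
      coeff_X_add_one_pow, Nat.add_sub_add_left, rf_add]
    push_cast
    ring
  · rw [coeff_X_pow_mul', if_neg (by simpa using mem_range.mp hm)]
    simp

end RisingPairing

/-- `(-1 - X) ^ N * A (X / (-1 - X))`: the degree-`N` homogenization of `A` evaluated at
`(X, -1 - X)`. -/
def mobiusTransform {R : Type*} [CommRing R] (N : ℕ) (A : R[X]) : R[X] :=
  ∑ r ∈ range (N + 1), C (A.coeff r) * X ^ r * (-1 - X) ^ (N - r)

lemma risingPairing_reflect {F : Type*} [Field F] [CharZero F] (N : ℕ) (e f : F) {A : ℚ[X]}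
    (hA : A.natDegree ≤ N) :
    risingPairing N e (e + N - 1 - f) A = risingPairing N e f (mobiusTransform N A) := by
  conv_lhs => rw [A.as_sum_range_C_mul_X_pow' (Nat.lt_succ_of_le hA)]
  rw [mobiusTransform, map_sum, map_sum]
  refine sum_congr rfl fun r hr => ?_
  obtain ⟨n, rfl⟩ := Nat.exists_eq_add_of_le (Nat.lt_succ_iff.mp (mem_range.mp hr))
  have hterm : C (A.coeff r) * X ^ r * (-1 - X) ^ (r + n - r)
      = (A.coeff r * (-1) ^ n) • (X ^ r * (1 + X) ^ n) := by
    rw [← C_mul', Nat.add_sub_cancel_left, C_mul, C_pow, C_neg, C_1, neg_sub_left, neg_pow,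
      add_comm X]
    ring
  rw [hterm, C_mul', map_smul, map_smul, risingPairing_X_pow _ _ _ (Nat.le_add_right r n),
    risingPairing_X_pow_mul_one_add_X_pow, Nat.add_sub_cancel_left,
    show -(e + ((r + n : ℕ) : F) - 1 - f) = -(e + r - f) - n + 1 by push_cast; ring,
    rf_neg_sub_add_one]
  simp only [Rat.smul_def]
  push_cast
  ring

lemma eval_mobiusTransform {𝕜 : Type*} [Field 𝕜] (N : ℕ) {A : 𝕜[X]} (hA : A.natDegree ≤ N)
    {x : 𝕜} (hx : -1 - x ≠ 0) :
    (mobiusTransform N A).eval x = (-1 - x) ^ N * A.eval (x / (-1 - x)) := by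
  rw [eval_eq_sum_range' (Nat.lt_succ_of_le hA), mul_sum, mobiusTransform, eval_finsetSum]
  refine sum_congr rfl fun r hr => ?_
  rw [← Nat.sub_add_cancel (Nat.lt_succ_iff.mp (mem_range.mp hr)), pow_add, div_pow,
    Nat.add_sub_cancel]
  simp only [eval_mul, eval_C, eval_pow, eval_X, eval_sub, eval_neg, eval_one]
  field_simp

lemma APoly_natDegree_le (l : ℕ) (hl : 0 < l) : (APoly l).natDegree ≤ 2 * l + 1 := by
  unfold APoly
  compute_degree
  all_goals omega

lemma mobiusTransform_APoly (l : ℕ) (hl : 0 < l) :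
    mobiusTransform (2 * l + 1) (APoly l) = -APoly l := by
  refine eq_of_infinite_eval_eq _ _ ((Set.finite_singleton (-1 : ℚ)).infinite_compl.mono ?_)
  intro x hx
  have hy : -1 - x ≠ 0 := fun h => Set.mem_compl_singleton_iff.mp hx (by linear_combination -h)
  rw [Set.mem_ofPred_eq, eval_mobiusTransform _ (APoly_natDegree_le l hl) hy, eval_neg]
  set y := -1 - x
  simp only [APoly, eval_mul, eval_pow, eval_add, eval_sub, eval_X, eval_one, eval_ofNat]
  have hquad : y ^ 2 * ((x / y) ^ 2 + x / y + 1) = x ^ 2 + x + 1 := by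
    field_simp
    ring
  have hcubic : y ^ 3 * ((2 * (x / y) + 1) * (x / y + 2) * (x / y - 1))
      = -((2 * x + 1) * (x + 2) * (x - 1)) := by
    field_simp
    ring
  generalize x / y = t at hquad hcubic ⊢
  generalize t ^ 2 + t + 1 = q at hquad ⊢
  clear_value y
  rw [show 2 * l + 1 = 2 * (l - 1) + 3 by omega, pow_add, pow_mul, ← hquad]
  linear_combination (y ^ 2 * q) ^ (l - 1) * hcubic

theorem PP_antisymm {F : Type*} [Field F] [CharZero F] (l : ℕ) (hl : 0 < l) (e f : F) :
    PP l e (e + 2 * l - f) = -PP l e f := by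
  rw [PP_eq_risingPairing, PP_eq_risingPairing,
    show e + 2 * l - f = e + ((2 * l + 1 : ℕ) : F) - 1 - f by push_cast; ring,
    risingPairing_reflect _ _ _ (APoly_natDegree_le l hl), mobiusTransform_APoly l hl, map_neg]

theorem Polynomial.eq_zero_of_eval_add_one_recurrence {R : Type*} [CommRing R] [IsDomain R]
    [CharZero R] {D : R[X]} {a b : R → R} {k₀ : R}
    (hrec : ∀ k, a k * D.eval (k + 1) = b k * D.eval k) (hb : b k₀ = 0)
    (ha : ∀ n : ℕ, a (k₀ + n) ≠ 0) : D = 0 := by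
  have hroot : ∀ n : ℕ, D.IsRoot (k₀ + n + 1) := by
    intro n
    induction n with
    | zero =>
      have h := hrec k₀
      rw [hb, zero_mul] at h
      simpa using (mul_eq_zero.mp h).resolve_left (by simpa using ha 0)
    | succ n ih =>
      have h := hrec (k₀ + n + 1)
      rw [IsRoot.def.mp ih, mul_zero] at h
      simpa [add_assoc] using
        (mul_eq_zero.mp h).resolve_left (by simpa [add_assoc] using ha (n + 1))
  refine eq_zero_of_infinite_isRoot D (Set.infinite_of_injective_forall_mem ?_ hroot)
  intro m n h
  simpa using h

lemma yv_sub_jv_add_ratCast_ne_zero (q : ℚ) : yv - jv + q ≠ 0 := by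
  have hq : algebraMap (MvPolynomial (Fin 2) ℚ) K (MvPolynomial.C q) = q :=
    eq_ratCast ((algebraMap (MvPolynomial (Fin 2) ℚ) K).comp MvPolynomial.C) q
  rw [yv, jv, ← hq, ← map_sub, ← map_add, ne_eq, IsFractionRing.to_map_eq_zero_iff]
  intro h
  simpa using congrArg (MvPolynomial.eval ![1 - q, 0]) h

theorem stmt18_general (l : ℕ) (hl : 0 < l) (i : ℤ)
    (s₁ s₂ : Polynomial K)
    (h₁ : ∀ k : K, PP l ((2 * i : ℤ) : K) ((i : K) + l - k)
      = ((i : K) + l - k) * (-2 * yv - 3 * i - l + 2 * jv - k) * s₁.eval (k + 1)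
        - ((i : K) + l + k) * (yv - jv + k) * s₁.eval k)
    (h₂ : ∀ k : K, PP l ((2 * i : ℤ) : K) ((i : K) + l - k)
      = ((i : K) + l - k) * (yv - jv - k) * s₂.eval (k + 1)
        - ((i : K) + l + k) * (-2 * yv - 3 * i - l + 2 * jv + k) * s₂.eval k) :
    ∀ k : K, s₁.eval k = s₂.eval (1 - k) := by
  set D := s₁ - s₂.comp (1 - X)
  have hD : ∀ k, D.eval k = s₁.eval k - s₂.eval (1 - k) := by simp [D]
  have hrec : ∀ k : K, ((i : K) + l - k) * (-2 * yv - 3 * i - l + 2 * jv - k) * D.eval (k + 1)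
      = ((i : K) + l + k) * (yv - jv + k) * D.eval k := by
    intro k
    -- `h₂` at `-k`, rewritten by the antisymmetry of `P_l`, is `h₁` with `s₂ (1 - ·)` for `s₁`
    have hanti := PP_antisymm l hl ((2 * i : ℤ) : K) ((i : K) + l - k)
    rw [show ((2 * i : ℤ) : K) + 2 * l - ((i : K) + l - k) = (i : K) + l - -k by push_cast; ring,
      h₂ (-k)] at hanti
    rw [hD, hD, show 1 - (k + 1) = -k by ring, show (1 : K) - k = -k + 1 by ring]
    linear_combination hanti - h₁ k
  have hDzero : D = 0 := by
    refine eq_zero_of_eval_add_one_recurrence hrec (k₀ := jv - yv) (by ring) fun n => ?_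
    have hleft := yv_sub_jv_add_ratCast_ne_zero (i + l - n)
    have hright := yv_sub_jv_add_ratCast_ne_zero (3 * i + l + n)
    push_cast at hleft hright
    exact mul_ne_zero (by convert hleft using 1; ring)
      (by convert neg_ne_zero.mpr hright using 1; ring)
  intro k
  simpa [hDzero, sub_eq_zero] using (hD k).symm

theorem stmt18 (l : ℕ) (hl : 0 < l) (i : ℤ) (hi : 1 ≤ i)
    (s₁ s₂ : Polynomial K)
    (h₁ : ∀ k : K, PP l ((2 * i : ℤ) : K) ((i : K) + l - k)
      = ((i : K) + l - k) * (-2 * yv - 3 * i - l + 2 * jv - k) * s₁.eval (k + 1)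
        - ((i : K) + l + k) * (yv - jv + k) * s₁.eval k)
    (h₂ : ∀ k : K, PP l ((2 * i : ℤ) : K) ((i : K) + l - k)
      = ((i : K) + l - k) * (yv - jv - k) * s₂.eval (k + 1)
        - ((i : K) + l + k) * (-2 * yv - 3 * i - l + 2 * jv + k) * s₂.eval k) :
    ∀ k : K, s₁.eval k = s₂.eval (1 - k) :=
  stmt18_general l hl i s₁ s₂ h₁ h₂
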